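/- The degree-6 polynomial 11T^6 - 2T^5 + T^4 + 12T^3 + T^2 - 2T + 11 has no roots that are roots of unity. -/

import Mathlib

/-!
The polynomial is palindromic, so `ζ⁻³ P(ζ)` is the cubic `11x³ - 2x² - 32x + 16` in
`x = ζ + ζ⁻¹`. If `ζ` were a root of unity, `x` would be an algebraic integer, so its monic
minimal polynomial over `ℤ` would divide that cubic. The cubic is primitive and has no root
mod 3, hence is irreducible over `ℤ`; it would then be associated to a monic polynomial,
which its leading coefficient `11` forbids.
-/

open Polynomial

namespace Polynomial

variable {R S : Type*} [CommRing R] [CommRing S] [IsDomain S] {φ : R →+* S}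
  {f : R[X]}

theorem IsPrimitive.isUnit_of_isUnit_map_of_map_leadingCoeff_ne_zero (hf : f.IsPrimitive)
    (hlc : φ f.leadingCoeff ≠ 0) (hu : IsUnit (f.map φ)) : IsUnit f := by
  have hdeg : f.natDegree = 0 := by
    rw [← natDegree_map_of_leadingCoeff_ne_zero φ hlc]
    exact natDegree_eq_zero_of_isUnit hu
  rw [eq_C_of_natDegree_eq_zero hdeg] at hf ⊢
  exact isUnit_C.mpr (isPrimitive_iff_isUnit_of_C_dvd.mp hf _ dvd_rfl)

theorem IsPrimitive.irreducible_of_irreducible_map_of_map_leadingCoeff_ne_zero [IsDomain R]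
    (hf : f.IsPrimitive) (hlc : φ f.leadingCoeff ≠ 0) (h_irr : Irreducible (f.map φ)) :
    Irreducible f := by
  refine ⟨fun h => h_irr.not_isUnit (h.map (mapRingHom φ)), fun a b h => ?_⟩
  have hlc' : φ a.leadingCoeff * φ b.leadingCoeff ≠ 0 := by
    rwa [← map_mul, ← leadingCoeff_mul, ← h]
  refine (h_irr.isUnit_or_isUnit (by rw [h, Polynomial.map_mul])).imp ?_ ?_
  · exact IsPrimitive.isUnit_of_isUnit_map_of_map_leadingCoeff_ne_zero
      (isPrimitive_of_dvd hf (Dvd.intro _ h.symm)) (left_ne_zero_of_mul hlc')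
  · exact IsPrimitive.isUnit_of_isUnit_map_of_map_leadingCoeff_ne_zero
      (isPrimitive_of_dvd hf (Dvd.intro_left _ h.symm)) (right_ne_zero_of_mul hlc')

end Polynomial

theorem isUnit_leadingCoeff_of_irreducible_of_aeval_eq_zero {R S : Type*} [CommRing R]
    [IsDomain R] [IsIntegrallyClosed R] [CommRing S] [IsDomain S] [Algebra R S]
    [Module.IsTorsionFree R S] {s : S} (hs : IsIntegral R s) {q : R[X]} (hq : Irreducible q)
    (hroot : aeval s q = 0) : IsUnit q.leadingCoeff := by
  obtain ⟨p, rfl⟩ := minpoly.isIntegrallyClosed_dvd hs hroot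
  have hp : IsUnit p := (hq.isUnit_or_isUnit rfl).resolve_left (minpoly.not_isUnit R s)
  rw [leadingCoeff_mul, (minpoly.monic hs).leadingCoeff, one_mul]
  exact hp.map leadingCoeffHom

theorem isIntegral_of_pow_eq_one {R A : Type*} [CommRing R] [Ring A] [Algebra R A] {x : A}
    {n : ℕ} (hn : n ≠ 0) (hx : x ^ n = 1) : IsIntegral R x :=
  ⟨X ^ n - C 1, monic_X_pow_sub_C 1 hn, by simp [hx]⟩

noncomputable def traceCubic : ℤ[X] := 11 * X ^ 3 - 2 * X ^ 2 - 32 * X + 16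

theorem traceCubic_natDegree : traceCubic.natDegree = 3 := by
  unfold traceCubic
  compute_degree!

theorem traceCubic_leadingCoeff : traceCubic.leadingCoeff = 11 := by
  rw [leadingCoeff, traceCubic_natDegree]
  simp [traceCubic, coeff_X, coeff_X_pow]

theorem traceCubic_coeff_zero : traceCubic.coeff 0 = 16 := by
  simp [traceCubic]

theorem traceCubic_isPrimitive : traceCubic.IsPrimitive := by
  refine isPrimitive_iff_isUnit_of_C_dvd.mpr fun r hr => isUnit_of_dvd_one ?_
  have h11 : r ∣ 11 := by
    simpa [traceCubic_leadingCoeff] using (C_dvd_iff_dvd_coeff r _).mp hr traceCubic.natDegree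
  have h16 : r ∣ 16 := by
    simpa [traceCubic_coeff_zero] using (C_dvd_iff_dvd_coeff r _).mp hr 0
  simpa using dvd_sub (dvd_mul_of_dvd_right h11 3) (dvd_mul_of_dvd_right h16 2)

theorem castRingHom_zmod_three_traceCubic_leadingCoeff_ne_zero :
    Int.castRingHom (ZMod 3) traceCubic.leadingCoeff ≠ 0 := by
  rw [traceCubic_leadingCoeff]
  decide

theorem irreducible_traceCubic_map_zmod_three :
    Irreducible (traceCubic.map (Int.castRingHom (ZMod 3))) := by
  apply irreducible_of_degree_le_three_of_not_isRoot
  · simp [natDegree_map_of_leadingCoeff_ne_zero _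
      castRingHom_zmod_three_traceCubic_leadingCoeff_ne_zero, traceCubic_natDegree]
  · simp only [IsRoot.def, eval_map, traceCubic, eval₂_add, eval₂_sub, eval₂_mul, eval₂_ofNat,
      eval₂_X_pow, eval₂_X]
    decide

theorem irreducible_traceCubic : Irreducible traceCubic :=
  traceCubic_isPrimitive.irreducible_of_irreducible_map_of_map_leadingCoeff_ne_zero
    castRingHom_zmod_three_traceCubic_leadingCoeff_ne_zero irreducible_traceCubic_map_zmod_three

theorem aeval_add_inv_traceCubic {K : Type*} [Field K] {ζ : K} (hζ : ζ ≠ 0) :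
    aeval (ζ + ζ⁻¹) traceCubic * ζ ^ 3 =
      11 * ζ ^ 6 - 2 * ζ ^ 5 + ζ ^ 4 + 12 * ζ ^ 3 + ζ ^ 2 - 2 * ζ + 11 := by
  simp only [traceCubic, map_add, map_sub, map_mul, map_pow, aeval_X, map_ofNat]
  field_simp
  ring

/-- The degree-6 polynomial `11T⁶ - 2T⁵ + T⁴ + 12T³ + T² - 2T + 11` has no roots that are
roots of unity. -/
theorem statement17 (ζ : ℂ)
    (h : 11 * ζ ^ 6 - 2 * ζ ^ 5 + ζ ^ 4 + 12 * ζ ^ 3 + ζ ^ 2 - 2 * ζ + 11 = 0) :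
    ¬ ∃ n : ℕ, 0 < n ∧ ζ ^ n = 1 := by
  rintro ⟨n, hn, hζn⟩
  have hζ0 : ζ ≠ 0 := by
    rintro rfl
    simp [hn.ne'] at hζn
  have hint : IsIntegral ℤ (ζ + ζ⁻¹) :=
    (isIntegral_of_pow_eq_one hn.ne' hζn).add
      (isIntegral_of_pow_eq_one hn.ne' (by rw [inv_pow, hζn, inv_one]))
  have hroot : aeval (ζ + ζ⁻¹) traceCubic = 0 := by
    simpa [h, hζ0] using aeval_add_inv_traceCubic hζ0
  have hunit :=
    isUnit_leadingCoeff_of_irreducible_of_aeval_eq_zero hint irreducible_traceCubic hroot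
  rw [traceCubic_leadingCoeff, Int.isUnit_iff] at hunit
  norm_num at hunit
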